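/- arXiv:1203.3710 — 2 statements merged into one kernel-verified Lean document; each statement's English description precedes it below -/
import Mathlib

section
/- Let G be a connected simple graph with an edge e, and let β²(H) := |C(H)| − |E(H)| + |V(H)| where C(H) is the set of induced cycles of H. Then β²(G/e) ≤ β²(G). -/
open SimpleGraph

/-- Simple-graph contraction identifying vertex `v` into vertex `u`
(the merged vertex is `u`; vertex `v` is removed). -/
def SimpleGraph.contractPair {V : Type*} (G : SimpleGraph V) (u v : V) :
    SimpleGraph {x : V // x ≠ v} where
  Adj x y := (x : V) ≠ (y : V) ∧
    (G.Adj x y ∨ ((x : V) = u ∧ G.Adj v y) ∨ ((y : V) = u ∧ G.Adj x v))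
  symm := by
    constructor
    rintro x y ⟨hne, h⟩
    refine ⟨hne.symm, ?_⟩
    rcases h with h | ⟨hx, hv⟩ | ⟨hy, hv⟩
    · exact Or.inl h.symm
    · exact Or.inr (Or.inr ⟨hx, hv.symm⟩)
    · exact Or.inr (Or.inl ⟨hy, hv.symm⟩)
  loopless := by constructor; rintro x ⟨h, -⟩; exact h rfl

/-- `H` is a minor of `G`: branch-set (model) definition. -/
def SimpleGraph.IsMinor {V W : Type*} (G : SimpleGraph V) (H : SimpleGraph W) : Prop :=
  ∃ f : W → Set V,
    (∀ w, (f w).Nonempty) ∧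
    (∀ w, (G.induce (f w)).Connected) ∧
    (∀ w w', w ≠ w' → Disjoint (f w) (f w')) ∧
    (∀ w w', H.Adj w w' → ∃ a ∈ f w, ∃ b ∈ f w', G.Adj a b)

/-- The Hadwiger number: the largest `t` with a `K_t` minor. -/
noncomputable def SimpleGraph.hadwigerNumber {V : Type*} (G : SimpleGraph V) : ℕ :=
  sSup {t | G.IsMinor (⊤ : SimpleGraph (Fin t))}

/-- `s` induces a cycle (of length ≥ 3) in `G`. -/
def SimpleGraph.IsInducedCycle {V : Type*} (G : SimpleGraph V) (s : Set V) : Prop :=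
  ∃ n, 3 ≤ n ∧ Nonempty ((G.induce s) ≃g SimpleGraph.cycleGraph n)

/-- The set of induced cycles of `G`, as vertex sets. -/
def SimpleGraph.inducedCycles {V : Type*} (G : SimpleGraph V) : Set (Set V) :=
  {s | G.IsInducedCycle s}

/-!
Let `ρ : V → V ∖ {v}` send `v` to `u` (`contractPairProj`). Every induced cycle `S` of `G/uv`
lifts to an induced cycle `C` of `G` with `ρ(C) = S`: if `u` alone, or `v` alone, is adjacent to
both cycle-neighbours of `u` in `S`, put that vertex in the place of `u`; otherwise one of these
neighbours sees only `u` and the other only `v`, and `S ∪ {v}` is an induced cycle, `v` sitting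
between `u` and the second one. The triangles `uva` over the common neighbours `a` of `u` and `v`
are further induced cycles of `G`, and no lift, since `ρ` squeezes them onto two vertices. Hence
`|C(G)| ≥ |C(G/uv)| + |N(u) ∩ N(v)|`. Dually, `ρ` is injective on the edges of `G` other than
`uv` and the edges `va` with `a ∈ N(u) ∩ N(v)`, so `|E(G)| ≤ |E(G/uv)| + |N(u) ∩ N(v)| + 1`,
while `G/uv` has one vertex less.
-/

theorem Nat.card_subtype_ne_add_one {α : Type*} [Finite α] (a : α) :
    Nat.card {x : α // x ≠ a} + 1 = Nat.card α := by
  classical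
  have := Fintype.ofFinite α
  have := Fintype.card_pos_iff.2 ⟨a⟩
  rw [Nat.card_eq_fintype_card, Nat.card_eq_fintype_card, Fintype.card_subtype_compl,
    Fintype.card_subtype_eq]
  omega

namespace SimpleGraph

variable {V W : Type*} {G : SimpleGraph V}

theorem cycleGraph_adj_iff_val {n : ℕ} {i j : Fin (n + 2)} :
    (cycleGraph (n + 2)).Adj i j ↔
      (i : ℕ) + 1 = j ∨ (j : ℕ) + 1 = i ∨ ((i : ℕ) = n + 1 ∧ (j : ℕ) = 0) ∨
        ((j : ℕ) = n + 1 ∧ (i : ℕ) = 0) := by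
  simp only [cycleGraph_adj, sub_eq_iff_eq_add', Fin.ext_iff, Fin.val_add_one, Fin.val_last]
  split_ifs <;> omega

def cycleGraph.rotate {n : ℕ} (c : Fin (n + 2)) :
    cycleGraph (n + 2) ≃g cycleGraph (n + 2) where
  toEquiv := Equiv.addLeft c
  map_rel_iff' := by simp [cycleGraph_adj]

def cycleGraph.reflect {n : ℕ} (c : Fin (n + 2)) :
    cycleGraph (n + 2) ≃g cycleGraph (n + 2) where
  toEquiv := Equiv.subLeft c
  map_rel_iff' := by simp [cycleGraph_adj, or_comm]

theorem exists_embedding_cycleGraph_eq_zero_one {n : ℕ} (φ : cycleGraph (n + 2) ↪g G)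
    {i j : Fin (n + 2)} (hij : (cycleGraph (n + 2)).Adj i j) :
    ∃ ψ : cycleGraph (n + 2) ↪g G,
      Set.range ψ = Set.range φ ∧ ψ 0 = φ i ∧ ψ 1 = φ j := by
  rcases hij with hij | hij
  · refine ⟨φ.comp (cycleGraph.reflect i).toEmbedding, ?_, by simp [cycleGraph.reflect], ?_⟩
    · exact EquivLike.range_comp φ (cycleGraph.reflect i)
    · simp [cycleGraph.reflect, ← hij]
  · refine ⟨φ.comp (cycleGraph.rotate i).toEmbedding, ?_, by simp [cycleGraph.rotate], ?_⟩
    · exact EquivLike.range_comp φ (cycleGraph.rotate i)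
    · simp [cycleGraph.rotate, ← hij]

theorem isInducedCycle_iff_exists_embedding {s : Set V} :
    G.IsInducedCycle s ↔ ∃ n, ∃ φ : cycleGraph (n + 3) ↪g G, Set.range φ = s := by
  constructor
  · rintro ⟨n, hn, ⟨ψ⟩⟩
    obtain ⟨n, rfl⟩ := Nat.exists_eq_add_of_le' hn
    refine ⟨n, (Embedding.induce s).comp ψ.symm.toEmbedding, ?_⟩
    change Set.range (Subtype.val ∘ ψ.symm) = s
    rw [Set.range_comp, EquivLike.range_eq_univ, Set.image_univ, Subtype.range_coe]
  · rintro ⟨n, φ, rfl⟩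
    exact ⟨n + 3, by omega, ⟨φ.isoInduceRange.symm⟩⟩

theorem IsInducedCycle.three_le_ncard {s : Set V} (hs : G.IsInducedCycle s) : 3 ≤ s.ncard := by
  obtain ⟨n, hn, ⟨ψ⟩⟩ := hs
  rwa [← Nat.card_coe_set_eq, Nat.card_congr ψ.toEquiv, Nat.card_fin]

theorem isInducedCycle_triple {a b c : V} (hab : G.Adj a b) (hac : G.Adj a c) (hbc : G.Adj b c) :
    G.IsInducedCycle {a, b, c} := by
  have hcard : Nat.card ({a, b, c} : Set V) = 3 := by
    rw [Nat.card_coe_set_eq, Set.ncard_eq_three]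
    exact ⟨a, b, c, hab.ne, hac.ne, hbc.ne, rfl⟩
  refine ⟨3, le_rfl, ⟨?_⟩⟩
  have hclique : G.IsClique {a, b, c} := by simp [isClique_insert, hab, hac, hbc]
  rw [cycleGraph_three_eq_top, induce_eq_top.2 hclique]
  exact Iso.completeGraph (Finite.equivFinOfCardEq hcard)

theorem IsInducedCycle.image {H : SimpleGraph W} {s : Set V} (hs : G.IsInducedCycle s)
    {f : V → W} (hf : Set.InjOn f s)
    (hadj : ∀ x ∈ s, ∀ y ∈ s, H.Adj (f x) (f y) ↔ G.Adj x y) :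
    H.IsInducedCycle (f '' s) := by
  rw [isInducedCycle_iff_exists_embedding] at hs ⊢
  obtain ⟨n, φ, rfl⟩ := hs
  refine ⟨n, ⟨⟨f ∘ φ, fun i j h => φ.injective (hf ⟨i, rfl⟩ ⟨j, rfl⟩ h)⟩,
    fun {i j} => (hadj _ ⟨i, rfl⟩ _ ⟨j, rfl⟩).trans φ.map_rel_iff⟩,
    Set.range_comp f φ⟩

theorem isInducedCycle_insert_of_pathGraph_embedding {n : ℕ} (φ : pathGraph (n + 2) ↪g G)
    {w : V} (hw : w ∉ Set.range φ)
    (hadj : ∀ i, G.Adj w (φ i) ↔ i = 0 ∨ i = Fin.last (n + 1)) :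
    G.IsInducedCycle (insert w (Set.range φ)) := by
  rw [isInducedCycle_iff_exists_embedding, ← Fin.range_snoc]
  have hinj := Fin.snoc_injective_of_injective φ.injective hw
  refine ⟨n, ⟨⟨Fin.snoc φ w, hinj⟩, fun {i j} => ?_⟩, rfl⟩
  induction i using Fin.lastCases <;> induction j using Fin.lastCases <;>
    simp only [Function.Embedding.coeFn_mk, Fin.snoc_castSucc, Fin.snoc_last, SimpleGraph.irrefl,
      hadj, G.adj_comm _ w, φ.map_rel_iff, cycleGraph_adj_iff_val, pathGraph_adj, Fin.ext_iff,
      Fin.val_last, Fin.val_castSucc, Fin.val_zero, true_and] <;>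
    omega

section Contraction

variable {u v : V}

open Classical in
noncomputable def contractPairProj (huv : u ≠ v) (a : V) : {x : V // x ≠ v} :=
  if h : a = v then ⟨u, huv⟩ else ⟨a, h⟩

variable (huv : u ≠ v)

theorem contractPairProj_self : contractPairProj huv v = ⟨u, huv⟩ := by
  simp [contractPairProj]

theorem contractPairProj_of_ne {a : V} (ha : a ≠ v) : contractPairProj huv a = ⟨a, ha⟩ := by
  simp [contractPairProj, ha]

theorem contractPairProj_val (x : {x : V // x ≠ v}) : contractPairProj huv x = x :=
  contractPairProj_of_ne huv x.2

theorem eq_or_of_contractPairProj_eq {a b : V}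
    (h : contractPairProj huv a = contractPairProj huv b) :
    a = b ∨ (a = u ∧ b = v) ∨ (a = v ∧ b = u) := by
  by_cases ha : a = v <;> by_cases hb : b = v
  · exact .inl (ha.trans hb.symm)
  · rw [ha, contractPairProj_self, contractPairProj_of_ne huv hb, Subtype.mk_eq_mk] at h
    exact .inr (.inr ⟨ha, h.symm⟩)
  · rw [hb, contractPairProj_self, contractPairProj_of_ne huv ha, Subtype.mk_eq_mk] at h
    exact .inr (.inl ⟨h, hb⟩)
  · rw [contractPairProj_of_ne huv ha, contractPairProj_of_ne huv hb, Subtype.mk_eq_mk] at h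
    exact .inl h

theorem contractPair_adj_of_adj {x y : {x : V // x ≠ v}} (h : G.Adj x y) :
    (G.contractPair u v).Adj x y :=
  ⟨h.ne, .inl h⟩

theorem contractPair_adj_iff_of_ne {x y : {x : V // x ≠ v}} (hx : (x : V) ≠ u)
    (hy : (y : V) ≠ u) :
    (G.contractPair u v).Adj x y ↔ G.Adj x y := by
  refine ⟨?_, contractPair_adj_of_adj⟩
  rintro ⟨-, h | ⟨h, -⟩ | ⟨h, -⟩⟩
  exacts [h, absurd h hx, absurd h hy]

theorem contractPair_adj_mk_left_iff {y : {x : V // x ≠ v}} :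
    (G.contractPair u v).Adj ⟨u, huv⟩ y ↔ (y : V) ≠ u ∧ (G.Adj u y ∨ G.Adj v y) := by
  simp +contextual [contractPair, eq_comm]

theorem contractPair_adj_contractPairProj {a b : V} (hab : G.Adj a b)
    (h : contractPairProj huv a ≠ contractPairProj huv b) :
    (G.contractPair u v).Adj (contractPairProj huv a) (contractPairProj huv b) := by
  by_cases ha : a = v <;> by_cases hb : b = v
  · exact absurd (by rw [ha, hb]) h
  · subst ha
    rw [contractPairProj_self, contractPairProj_of_ne huv hb] at h ⊢
    exact (contractPair_adj_mk_left_iff huv).2 ⟨fun hbu => h (Subtype.ext hbu.symm), .inr hab⟩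
  · subst hb
    rw [contractPairProj_self, contractPairProj_of_ne huv ha] at h ⊢
    exact ((contractPair_adj_mk_left_iff huv).2
      ⟨fun hau => h (Subtype.ext hau), .inr hab.symm⟩).symm
  · rw [contractPairProj_of_ne huv ha, contractPairProj_of_ne huv hb]
    exact contractPair_adj_of_adj hab

/-- For a common neighbour `a`, the edge `va` merges with `ua`, and `uv` itself disappears. -/
def contractPairLostEdges (G : SimpleGraph V) (u v : V) : Set (Sym2 V) :=
  insert s(u, v) ((fun a => s(a, v)) '' G.commonNeighbors u v)

theorem ncard_contractPairLostEdges_le [Finite V] :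
    (G.contractPairLostEdges u v).ncard ≤ (G.commonNeighbors u v).ncard + 1 :=
  (Set.ncard_insert_le _ _).trans (Nat.add_le_add_right (Set.ncard_image_le (Set.toFinite _)) 1)

theorem mapsTo_map_contractPairProj :
    Set.MapsTo (Sym2.map (contractPairProj huv)) (G.edgeSet \ {s(u, v)})
      (G.contractPair u v).edgeSet := by
  intro z
  induction z using Sym2.ind with
  | _ a b =>
    rintro ⟨hab, hne⟩
    refine contractPair_adj_contractPairProj huv hab fun h => ?_
    rcases eq_or_of_contractPairProj_eq huv h with rfl | ⟨rfl, rfl⟩ | ⟨rfl, rfl⟩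
    exacts [hab.ne rfl, hne rfl, hne Sym2.eq_swap]

theorem eq_of_contractPairProj_eq_of_notMem {a b c d : V} (hab : G.Adj a b) (hcd : G.Adj c d)
    (hab' : s(a, b) ∉ G.contractPairLostEdges u v)
    (hcd' : s(c, d) ∉ G.contractPairLostEdges u v)
    (hac : contractPairProj huv a = contractPairProj huv c)
    (hbd : contractPairProj huv b = contractPairProj huv d) :
    s(a, b) = s(c, d) := by
  have lost : ∀ x, G.Adj u x → G.Adj v x → s(x, v) ∈ G.contractPairLostEdges u v :=
    fun x hux hvx => Set.mem_insert_of_mem _ ⟨x, ⟨hux, hvx⟩, rfl⟩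
  have lost_uv : s(u, v) ∈ G.contractPairLostEdges u v := Set.mem_insert _ _
  rcases eq_or_of_contractPairProj_eq huv hac with rfl | ⟨rfl, rfl⟩ | ⟨rfl, rfl⟩ <;>
    rcases eq_or_of_contractPairProj_eq huv hbd with rfl | ⟨rfl, rfl⟩ | ⟨rfl, rfl⟩
  · rfl
  · exact absurd (lost a hab.symm hcd.symm) hcd'
  · exact absurd (lost a hcd.symm hab.symm) hab'
  · exact absurd (Sym2.eq_swap ▸ lost b hab hcd) hcd'
  · exact (hab.ne rfl).elim
  · exact absurd lost_uv hab'
  · exact absurd (Sym2.eq_swap ▸ lost b hcd hab) hab'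
  · exact absurd (Sym2.eq_swap ▸ lost_uv) hab'
  · exact (hab.ne rfl).elim

theorem injOn_map_contractPairProj :
    Set.InjOn (Sym2.map (contractPairProj huv)) (G.edgeSet \ G.contractPairLostEdges u v) := by
  intro z₁ hz₁ z₂ hz₂ h
  induction z₁ using Sym2.ind with | _ a b =>
  induction z₂ using Sym2.ind with | _ c d =>
  obtain ⟨hab, hab'⟩ := hz₁
  obtain ⟨hcd, hcd'⟩ := hz₂
  rw [Sym2.map_mk, Sym2.map_mk, Sym2.eq_iff] at h
  rcases h with ⟨hac, hbd⟩ | ⟨had, hbc⟩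
  · exact eq_of_contractPairProj_eq_of_notMem huv hab hcd hab' hcd' hac hbd
  · rw [Sym2.eq_swap (a := c)] at hcd' ⊢
    exact eq_of_contractPairProj_eq_of_notMem huv hab hcd.symm hab' hcd' had hbc

theorem ncard_edgeSet_le_contractPair [Finite V] (huv : u ≠ v) :
    G.edgeSet.ncard ≤
      (G.contractPair u v).edgeSet.ncard + (G.commonNeighbors u v).ncard + 1 := by
  have hmaps : Set.MapsTo (Sym2.map (contractPairProj huv))
      (G.edgeSet \ G.contractPairLostEdges u v) (G.contractPair u v).edgeSet :=
    (mapsTo_map_contractPairProj huv).mono_left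
      (Set.sdiff_subset_sdiff_right (Set.singleton_subset_iff.2 (Set.mem_insert _ _)))
  calc G.edgeSet.ncard
      ≤ (G.edgeSet \ G.contractPairLostEdges u v).ncard + (G.contractPairLostEdges u v).ncard :=
        Set.ncard_le_ncard_sdiff_add_ncard _ _
    _ ≤ (G.contractPair u v).edgeSet.ncard + ((G.commonNeighbors u v).ncard + 1) :=
        add_le_add (Set.ncard_le_ncard_of_injOn _ hmaps (injOn_map_contractPairProj huv))
          ncard_contractPairLostEdges_le
    _ = _ := by omega

theorem contractPairProj_update_val [DecidableEq V] {z : V} (hz : z = u ∨ z = v)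
    (x : {x : V // x ≠ v}) :
    contractPairProj huv (Function.update Subtype.val ⟨u, huv⟩ z x) = x := by
  by_cases hx : x = ⟨u, huv⟩
  · subst hx
    rw [Function.update_self]
    rcases hz with rfl | rfl
    exacts [contractPairProj_of_ne huv huv, contractPairProj_self huv]
  · rw [Function.update_of_ne hx, contractPairProj_val]

theorem adj_update_val_iff [DecidableEq V] {z : V} (hz : z = u ∨ z = v)
    {S : Set {x : V // x ≠ v}}
    (hS : ⟨u, huv⟩ ∈ S →
      ∀ w ∈ S, (G.contractPair u v).Adj ⟨u, huv⟩ w → G.Adj z w) :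
    ∀ x ∈ S, ∀ y ∈ S, G.Adj (Function.update Subtype.val ⟨u, huv⟩ z x)
      (Function.update Subtype.val ⟨u, huv⟩ z y) ↔ (G.contractPair u v).Adj x y := by
  have key : ∀ y ∈ S, y ≠ ⟨u, huv⟩ → ⟨u, huv⟩ ∈ S →
      (G.Adj z y ↔ (G.contractPair u v).Adj ⟨u, huv⟩ y) := by
    refine fun y hy hyu huS => ⟨fun h => (contractPair_adj_mk_left_iff huv).2
      ⟨fun h' => hyu (Subtype.ext h'), ?_⟩, hS huS y hy⟩
    rcases hz with rfl | rfl
    exacts [.inl h, .inr h]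
  intro x hx y hy
  by_cases hxu : x = ⟨u, huv⟩ <;> by_cases hyu : y = ⟨u, huv⟩
  · simp [hxu, hyu]
  · subst hxu
    rw [Function.update_self, Function.update_of_ne hyu]
    exact key y hy hyu hx
  · subst hyu
    rw [Function.update_self, Function.update_of_ne hxu, G.adj_comm,
      (G.contractPair u v).adj_comm]
    exact key x hx hxu hy
  · rw [Function.update_of_ne hxu, Function.update_of_ne hyu,
      contractPair_adj_iff_of_ne (fun h => hxu (Subtype.ext h)) (fun h => hyu (Subtype.ext h))]

theorem isInducedCycle_insert_of_embedding_contractPair (he : G.Adj u v) {n : ℕ}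
    (ψ : cycleGraph (n + 3) ↪g G.contractPair u v) (h0 : ψ 0 = ⟨u, he.ne⟩)
    (h1 : ¬ G.Adj v (ψ 1)) (hlast : ¬ G.Adj u (ψ (Fin.last (n + 2)))) :
    G.IsInducedCycle (insert v (Subtype.val '' Set.range ψ)) := by
  have ne_u : ∀ k : Fin (n + 3), (k : ℕ) ≠ 0 → (ψ k : V) ≠ u := fun k hk h =>
    hk (by rw [ψ.injective (Subtype.ext (h.trans (congrArg Subtype.val h0).symm))]; rfl)
  have nbr : ∀ k : Fin (n + 3), (k : ℕ) ≠ 0 →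
      ((k : ℕ) = 1 ∨ (k : ℕ) = n + 2 ↔ G.Adj u (ψ k) ∨ G.Adj v (ψ k)) := by
    intro k hk
    have h := contractPair_adj_mk_left_iff (G := G) he.ne (y := ψ k)
    rw [← h0, ψ.map_rel_iff, cycleGraph_adj_iff_val, Fin.val_zero,
      and_iff_right (ne_u k hk)] at h
    rw [← h]
    omega
  have adj_u : ∀ k : Fin (n + 3), G.Adj u (ψ k) ↔ (k : ℕ) = 1 := by
    intro k
    by_cases hk : (k : ℕ) = 0
    · obtain rfl : k = 0 := Fin.ext hk
      simp [h0]
    refine ⟨fun h => ((nbr k hk).2 (.inl h)).resolve_right fun hk' => ?_, fun hk' => ?_⟩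
    · obtain rfl : k = Fin.last (n + 2) := Fin.ext hk'
      exact hlast h
    · obtain rfl : k = 1 := Fin.ext hk'
      exact ((nbr 1 hk).1 (.inl hk')).resolve_right h1
  have adj_v : ∀ k : Fin (n + 3), G.Adj v (ψ k) ↔ (k : ℕ) = 0 ∨ (k : ℕ) = n + 2 := by
    intro k
    by_cases hk : (k : ℕ) = 0
    · obtain rfl : k = 0 := Fin.ext hk
      simp [h0, he.symm]
    refine ⟨fun h => .inr (((nbr k hk).2 (.inr h)).resolve_left fun hk' => ?_),
      fun hk' => ((nbr k hk).1 (.inr (hk'.resolve_left hk))).resolve_left fun h => ?_⟩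
    · obtain rfl : k = 1 := Fin.ext hk'
      exact h1 h
    · obtain rfl : k = Fin.last (n + 2) := Fin.ext (hk'.resolve_left hk)
      exact hlast h
  let p : pathGraph (n + 3) ↪g G :=
    ⟨⟨fun k => ψ k, Subtype.val_injective.comp ψ.injective⟩, fun {i j} => by
      simp only [Function.Embedding.coeFn_mk]
      by_cases hi : (i : ℕ) = 0
      · obtain rfl : i = 0 := Fin.ext hi
        rw [h0, adj_u, pathGraph_adj]
        simp only [Fin.val_zero]
        omega
      by_cases hj : (j : ℕ) = 0
      · obtain rfl : j = 0 := Fin.ext hj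
        rw [h0, G.adj_comm, adj_u, pathGraph_adj]
        simp only [Fin.val_zero]
        omega
      rw [← contractPair_adj_iff_of_ne (ne_u i hi) (ne_u j hj), ψ.map_rel_iff,
        cycleGraph_adj_iff_val, pathGraph_adj]
      omega⟩
  have hrange : Subtype.val '' Set.range ψ = Set.range p := (Set.range_comp _ _).symm
  rw [hrange]
  refine isInducedCycle_insert_of_pathGraph_embedding p (fun ⟨k, hk⟩ => (ψ k).2 hk) fun k => ?_
  rw [Fin.ext_iff, Fin.ext_iff]
  exact adj_v k

theorem IsInducedCycle.insert_val_image_of_contractPair (he : G.Adj u v)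
    {S : Set {x : V // x ≠ v}} (hS : (G.contractPair u v).IsInducedCycle S)
    (huS : ⟨u, he.ne⟩ ∈ S) {a b : {x : V // x ≠ v}} (ha : a ∈ S) (hb : b ∈ S)
    (hua : (G.contractPair u v).Adj ⟨u, he.ne⟩ a)
    (hub : (G.contractPair u v).Adj ⟨u, he.ne⟩ b)
    (hva : ¬ G.Adj v a) (hub' : ¬ G.Adj u b) :
    G.IsInducedCycle (insert v (Subtype.val '' S)) := by
  rw [isInducedCycle_iff_exists_embedding] at hS
  obtain ⟨n, φ, rfl⟩ := hS
  obtain ⟨i, hi⟩ := huS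
  obtain ⟨j, rfl⟩ := ha
  obtain ⟨k, rfl⟩ := hb
  obtain ⟨ψ, hrange, hψ0, hψ1⟩ :=
    exists_embedding_cycleGraph_eq_zero_one φ (φ.map_rel_iff.1 (hi ▸ hua))
  obtain ⟨l, hl⟩ : φ k ∈ Set.range ψ := hrange ▸ ⟨k, rfl⟩
  have hua' : G.Adj u (φ j) :=
    (((contractPair_adj_mk_left_iff he.ne).1 hua).2).resolve_right hva
  have hl_last : l = Fin.last (n + 2) := by
    have h0l : (l : ℕ) = 1 ∨ (l : ℕ) = n + 2 := by
      have := ψ.map_rel_iff.1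
        (show (G.contractPair u v).Adj (ψ 0) (ψ l) by rwa [hψ0, hi, hl])
      rw [cycleGraph_adj_iff_val, Fin.val_zero] at this
      omega
    refine Fin.ext (h0l.resolve_left fun h => hub' ?_)
    obtain rfl : l = 1 := Fin.ext h
    rwa [← hl, hψ1]
  rw [← hrange]
  exact isInducedCycle_insert_of_embedding_contractPair he ψ (hψ0.trans hi) (hψ1 ▸ hva)
    (hl_last ▸ hl ▸ hub')

theorem IsInducedCycle.exists_contractPairProj_image_eq (he : G.Adj u v)
    {S : Set {x : V // x ≠ v}} (hS : (G.contractPair u v).IsInducedCycle S) :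
    ∃ C, G.IsInducedCycle C ∧ contractPairProj he.ne '' C = S := by
  classical
  by_cases h : ∃ z, (z = u ∨ z = v) ∧ (⟨u, he.ne⟩ ∈ S →
      ∀ w ∈ S, (G.contractPair u v).Adj ⟨u, he.ne⟩ w → G.Adj z w)
  · obtain ⟨z, hz, hzS⟩ := h
    have hinv : Function.LeftInverse (contractPairProj he.ne)
        (Function.update Subtype.val ⟨u, he.ne⟩ z) := contractPairProj_update_val he.ne hz
    refine ⟨_, hS.image hinv.injective.injOn (adj_update_val_iff he.ne hz hzS), ?_⟩
    rw [Set.image_image]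
    simp only [hinv _, Set.image_id']
  · push Not at h
    obtain ⟨huS, b, hb, hub, hub'⟩ := h u (.inl rfl)
    obtain ⟨-, a, ha, hua, hva⟩ := h v (.inr rfl)
    refine ⟨_, hS.insert_val_image_of_contractPair he huS ha hb hua hub hva hub', ?_⟩
    rw [Set.image_insert_eq, contractPairProj_self, Set.image_image]
    simp only [contractPairProj_val, Set.image_id', Set.insert_eq_of_mem huS]

theorem ncard_inducedCycles_contractPair_add_le [Finite V] (he : G.Adj u v) :
    (G.contractPair u v).inducedCycles.ncard + (G.commonNeighbors u v).ncard ≤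
      G.inducedCycles.ncard := by
  set A :=
    {C ∈ G.inducedCycles | contractPairProj he.ne '' C ∈ (G.contractPair u v).inducedCycles}
  set B := (fun a => ({u, v, a} : Set V)) '' G.commonNeighbors u v
  have hA : (G.contractPair u v).inducedCycles.ncard ≤ A.ncard := by
    refine (Set.ncard_le_ncard ?_ (Set.toFinite _)).trans
      (Set.ncard_image_le (f := (contractPairProj he.ne '' ·)) (Set.toFinite A))
    intro S hS
    obtain ⟨C, hC, rfl⟩ := IsInducedCycle.exists_contractPairProj_image_eq he hS
    exact ⟨C, ⟨hC, hS⟩, rfl⟩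
  have hB : B.ncard = (G.commonNeighbors u v).ncard := by
    refine Set.InjOn.ncard_image fun a ha b _ hab => ?_
    have : a ∈ ({u, v, b} : Set V) := hab ▸ by simp
    rcases this with rfl | rfl | rfl
    exacts [absurd ha.1 (G.loopless.irrefl _), absurd ha.2 (G.loopless.irrefl _), rfl]
  have hdisj : Disjoint A B := by
    rw [Set.disjoint_right]
    rintro _ ⟨a, -, rfl⟩ ⟨-, hcyc⟩
    have himage :
        contractPairProj he.ne '' {u, v, a} = {⟨u, he.ne⟩, contractPairProj he.ne a} := by
      rw [Set.image_insert_eq, Set.image_insert_eq, Set.image_singleton, contractPairProj_self,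
        contractPairProj_of_ne he.ne he.ne, Set.insert_idem]
    have h3 := IsInducedCycle.three_le_ncard hcyc
    rw [himage] at h3
    have := Set.ncard_insert_le (⟨u, he.ne⟩ : {x : V // x ≠ v}) {contractPairProj he.ne a}
    rw [Set.ncard_singleton] at this
    omega
  have hsub : A ∪ B ⊆ G.inducedCycles := Set.union_subset (Set.sep_subset _ _) <| by
    rintro _ ⟨a, ⟨hua, hva⟩, rfl⟩
    exact isInducedCycle_triple he hua hva
  calc (G.contractPair u v).inducedCycles.ncard + (G.commonNeighbors u v).ncard
      ≤ A.ncard + B.ncard := by omega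
    _ = (A ∪ B).ncard := (Set.ncard_union_eq hdisj).symm
    _ ≤ G.inducedCycles.ncard := Set.ncard_le_ncard hsub

end Contraction

end SimpleGraph

theorem stmt11_general {V : Type*} [Fintype V] (G : SimpleGraph V)
    (u v : V) (he : G.Adj u v) :
    ((G.contractPair u v).inducedCycles.ncard : ℤ)
        - ((G.contractPair u v).edgeSet.ncard : ℤ)
        + (Nat.card {x : V // x ≠ v} : ℤ)
      ≤ (G.inducedCycles.ncard : ℤ) - (G.edgeSet.ncard : ℤ) + (Nat.card V : ℤ) := by
  have hV := Nat.card_subtype_ne_add_one v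
  have hE := G.ncard_edgeSet_le_contractPair he.ne
  have hC := G.ncard_inducedCycles_contractPair_add_le he
  omega

theorem stmt11 {V : Type*} [Fintype V] (G : SimpleGraph V) (hconn : G.Connected)
    (u v : V) (he : G.Adj u v) :
    ((G.contractPair u v).inducedCycles.ncard : ℤ)
        - ((G.contractPair u v).edgeSet.ncard : ℤ)
        + (Nat.card {x : V // x ≠ v} : ℤ)
      ≤ (G.inducedCycles.ncard : ℤ) - (G.edgeSet.ncard : ℤ) + (Nat.card V : ℤ) :=
  stmt11_general G u v he
end

section
/- If a connected simple graph G has fewer than C(n,3) induced cycles, then both the chromatic number χ(G) and the Hadwiger number h(G) are less than n. -/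
open SimpleGraph

/-!
Fix a proper colouring of `G` with `k = χ(G)` colours. For any three colours, the vertices
carrying them cannot induce a bipartite graph, since otherwise two colours would suffice for them
and `G` would be `(k - 1)`-colourable. So they carry an odd closed walk, and a shortest one is an
induced odd cycle; being odd, it uses all three colours. Distinct triples of colours therefore give
distinct induced cycles, and `G` has at least `C(k, 3)` of them.

Likewise, given a `K_t` minor, any three branch sets `A`, `B`, `C` span an induced cycle that lies
in their union and meets each of them: take a `B`–`C` edge `xy` and a path from `x` to `y` through
the union avoiding `B`–`C` edges, with the path as short as possible over all such edges. It is
chordless, and it passes through `A`. The triple is read off the cycle as the set of branch sets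
it meets, so again there are at least `C(t, 3)` induced cycles.
-/

namespace SimpleGraph

open Finset

variable {V : Type*} {G : SimpleGraph V}

theorem choose_card_le_ncard_of_forall_card_eq {α ι : Type*} [Fintype ι] {S : Set α}
    (hS : S.Finite) (f : α → Set ι) (r : ℕ) (h : ∀ T : Finset ι, #T = r → ∃ a ∈ S, f a = T) :
    (Fintype.card ι).choose r ≤ S.ncard :=
  calc (Fintype.card ι).choose r = (↑(powersetCard r (univ : Finset ι)) : Set (Finset ι)).ncard := by
        rw [Set.ncard_coe_finset, card_powersetCard, card_univ]
    _ = ((↑) '' (↑(powersetCard r (univ : Finset ι)) : Set (Finset ι)) : Set (Set ι)).ncard :=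
        (Set.ncard_image_of_injective _ coe_injective).symm
    _ ≤ (f '' S).ncard := Set.ncard_le_ncard (by
        rintro _ ⟨T, hT, rfl⟩
        exact h T (mem_powersetCard.mp hT).2) (hS.image f)
    _ ≤ S.ncard := Set.ncard_image_le hS

theorem cycleGraph_adj_of_lt {m : ℕ} {i j : Fin m} (hij : i < j) :
    (cycleGraph m).Adj i j ↔ (j : ℕ) = i + 1 ∨ (i : ℕ) = 0 ∧ (j : ℕ) + 1 = m := by
  have hij' : (i : ℕ) < j := hij
  rw [cycleGraph_adj', Fin.coe_sub_iff_lt.mpr hij, Fin.sub_val_of_le hij.le]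
  omega

theorem not_colorable_two_cycleGraph_of_odd {m : ℕ} (hodd : Odd m) (hm : 3 ≤ m) :
    ¬ (cycleGraph m).Colorable 2 := fun h => by
  have := h.chromaticNumber_le
  rw [chromaticNumber_cycleGraph_of_odd m (by omega) hodd] at this
  norm_num at this

theorem isInducedCycle_range {m : ℕ} (hm : 3 ≤ m) (f : cycleGraph m ↪g G) :
    G.IsInducedCycle (Set.range f) :=
  ⟨m, hm, ⟨f.isoInduceRange.symm⟩⟩

namespace Walk

theorem exists_split_at {u v : V} (p : G.Walk u v) {i j : ℕ} (hij : i ≤ j) (hj : j ≤ p.length) :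
    ∃ (a : G.Walk u (p.getVert i)) (q : G.Walk (p.getVert i) (p.getVert j))
      (b : G.Walk (p.getVert j) v), a.length = i ∧ q.length = j - i ∧ b.length = p.length - j :=
  ⟨p.take i, ((p.drop i).take (j - i)).copy rfl (by rw [drop_getVert, Nat.add_sub_cancel' hij]),
    p.drop j, by rw [take_length]; omega, by rw [length_copy, take_length, drop_length]; omega,
    drop_length p j⟩

theorem IsPath.exists_cycleGraph_embedding {x y : V} {p : G.Walk x y} (hp : p.IsPath)
    (hxy : G.Adj x y) (hchord : ∀ i j, i + 2 ≤ j → j ≤ p.length →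
      G.Adj (p.getVert i) (p.getVert j) → i = 0 ∧ j = p.length) :
    ∃ f : cycleGraph (p.length + 1) ↪g G, Set.range f = {v | v ∈ p.support} := by
  have hadj_iff : ∀ i j : Fin (p.length + 1), i < j →
      (G.Adj (p.getVert i) (p.getVert j) ↔ (cycleGraph _).Adj i j) := by
    intro i j hij
    have hij' : (i : ℕ) < j := hij
    rw [cycleGraph_adj_of_lt hij]
    constructor
    · intro h
      by_cases hj : (j : ℕ) = i + 1
      · exact .inl hj
      · have := hchord i j (by omega) (by omega) h
        omega
    · rintro (hj | ⟨hi, hj⟩)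
      · rw [hj]
        exact p.adj_getVert_succ (by omega)
      · rw [hi, show (j : ℕ) = p.length by omega, getVert_zero, getVert_length]
        exact hxy
  refine ⟨⟨⟨fun i => p.getVert i, fun i j h => Fin.ext <| hp.getVert_injOn
    (by simp only [Set.mem_ofPred_eq]; omega) (by simp only [Set.mem_ofPred_eq]; omega) h⟩, ?_⟩, ?_⟩
  · intro i j
    rcases lt_trichotomy i j with h | rfl | h
    · exact hadj_iff i j h
    · simp
    · rw [G.adj_comm, (cycleGraph _).adj_comm]
      exact hadj_iff j i h
  · ext v
    simp only [Set.mem_range, Set.mem_ofPred_eq, mem_support_iff_exists_getVert]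
    exact ⟨fun ⟨i, hi⟩ => ⟨i, hi, by omega⟩, fun ⟨n, hn, hnl⟩ => ⟨⟨n, by omega⟩, hn⟩⟩

theorem exists_cycleGraph_embedding_of_loop {x : V} (c : G.Walk x x) (hpos : 0 < c.length)
    (hinj : ∀ i j, i < j → j < c.length → c.getVert i ≠ c.getVert j)
    (hchord : ∀ i j, i + 2 ≤ j → j < c.length → G.Adj (c.getVert i) (c.getVert j) →
      i = 0 ∧ j = c.length - 1) :
    Nonempty (cycleGraph c.length ↪g G) := by
  set p := c.take (c.length - 1)
  have hplen : p.length = c.length - 1 := by simp only [p, take_length]; omega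
  have hpv : ∀ k, k ≤ c.length - 1 → p.getVert k = c.getVert k := fun k hk => by
    simp [p, take_getVert, Nat.min_eq_right hk]
  have hp : p.IsPath := by
    rw [← IsPath.getVert_injOn_iff]
    intro i hi j hj h
    simp only [Set.mem_ofPred_eq, hplen] at hi hj
    rw [hpv i hi, hpv j hj] at h
    by_contra hne
    rcases Nat.lt_or_gt_of_ne hne with hlt | hlt
    · exact hinj i j hlt (by omega) h
    · exact hinj j i hlt (by omega) h.symm
  have hxy : G.Adj x (c.getVert (c.length - 1)) := by
    have := c.adj_getVert_succ (i := c.length - 1) (by omega)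
    rw [Nat.sub_add_cancel (by omega), getVert_length] at this
    exact this.symm
  obtain ⟨f, -⟩ := hp.exists_cycleGraph_embedding hxy fun i j hij hj hadj => by
    rw [hplen] at hj ⊢
    rw [hpv i (by omega), hpv j hj] at hadj
    exact hchord i j hij (by omega) hadj
  rw [hplen, Nat.sub_add_cancel (by omega)] at f
  exact ⟨f⟩

/-- A repeated vertex or a chord splits a shortest odd closed walk into two shorter closed
walks, one of which is odd. -/
theorem exists_cycleGraph_embedding_of_odd_length {u : V} (w : G.Walk u u) (hw : Odd w.length) :
    ∃ m, Odd m ∧ 3 ≤ m ∧ Nonempty (cycleGraph m ↪g G) := by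
  classical
  have hex : ∃ ℓ, ∃ (x : V) (c : G.Walk x x), Odd c.length ∧ c.length = ℓ := ⟨_, u, w, hw, rfl⟩
  obtain ⟨x, c, hodd, hc⟩ := Nat.find_spec hex
  have hmin : ∀ {z : V} (c' : G.Walk z z), c'.length < c.length → Even c'.length :=
    fun c' hlt => Nat.not_odd_iff_even.mp fun h =>
      (Nat.find_min' hex ⟨_, c', h, rfl⟩).not_gt (hc ▸ hlt)
  have h3 : 3 ≤ c.length := by
    by_contra! hlt
    have h1 : c.length = 1 := by obtain ⟨t, ht⟩ := hodd; omega
    have := c.adj_getVert_succ (i := 0) (by omega)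
    rw [getVert_zero, zero_add, ← h1, getVert_length] at this
    exact G.irrefl this
  rw [Nat.odd_iff] at hodd
  refine ⟨c.length, Nat.odd_iff.mpr hodd, h3, c.exists_cycleGraph_embedding_of_loop (by omega) ?_ ?_⟩
  · intro i j hij hj heq
    obtain ⟨a, q, b, ha, hq, hb⟩ := c.exists_split_at hij.le hj.le
    have h1 := hmin (q.copy rfl heq.symm) (by simp only [length_copy]; omega)
    have h2 := hmin ((b.append a).copy rfl heq) (by simp only [length_copy, length_append]; omega)
    simp only [length_copy, length_append, Nat.even_iff] at h1 h2
    omega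
  · intro i j hij hj hadj
    by_contra hend
    obtain ⟨a, q, b, ha, hq, hb⟩ := c.exists_split_at (by omega : i ≤ j) hj.le
    have h1 := hmin (q.concat hadj.symm) (by simp only [length_concat]; omega)
    have h2 := hmin ((b.append a).concat hadj) (by simp only [length_concat, length_append]; omega)
    simp only [length_concat, length_append, Nat.even_iff] at h1 h2
    omega

end Walk

theorem colorable_two_of_forall_even_length (h : ∀ (u : V) (w : G.Walk u u), Even w.length) :
    G.Colorable 2 := by
  choose root hroot using fun c : G.ConnectedComponent => c.exists_rep
  have hreach : ∀ v, G.Reachable (root (G.connectedComponentMk v)) v := fun v =>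
    ConnectedComponent.exact (hroot _)
  let C : G.Coloring Bool := Coloring.mk (fun v => decide (Even (hreach v).some.length)) <| by
    intro a b hab
    have hr : root (G.connectedComponentMk b) = root (G.connectedComponentMk a) := by
      rw [ConnectedComponent.sound hab.reachable]
    have := h _ (((hreach a).some.append (Walk.cons hab (hreach b).some.reverse)).copy rfl hr)
    simp only [Walk.length_copy, Walk.length_append, Walk.length_cons, Walk.length_reverse,
      Nat.even_add, Nat.even_add_one] at this
    simp only [ne_eq, decide_eq_decide]
    tauto
  simpa using C.colorable

theorem exists_cycleGraph_embedding_of_not_colorable_two (h : ¬ G.Colorable 2) :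
    ∃ m, Odd m ∧ 3 ≤ m ∧ Nonempty (cycleGraph m ↪g G) := by
  obtain ⟨u, w, hw⟩ : ∃ (u : V) (w : G.Walk u u), Odd w.length := by
    by_contra! hall
    exact h (colorable_two_of_forall_even_length fun u w => Nat.not_odd_iff_even.mp (hall u w))
  exact w.exists_cycleGraph_embedding_of_odd_length hw

theorem Coloring.colorable_of_colorable_induce {α : Type*} [Fintype α] (C : G.Coloring α)
    (T : Finset α) {m : ℕ} (hm : (G.induce {v | C v ∈ T}).Colorable m) :
    G.Colorable (Fintype.card α - #T + m) := by
  classical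
  obtain ⟨D⟩ := hm
  let E : G.Coloring ({a // a ∉ T} ⊕ Fin m) := Coloring.mk
    (fun v => if hv : C v ∈ T then .inr (D ⟨v, hv⟩) else .inl ⟨C v, hv⟩) <| by
      intro a b hab
      by_cases ha : C a ∈ T <;> by_cases hb : C b ∈ T <;>
        simp only [ha, hb, dite_true, dite_false, ne_eq, reduceCtorEq, not_false_eq_true,
          Sum.inl.injEq, Sum.inr.injEq, Subtype.mk.injEq]
      · exact D.valid (G := G.induce _) (v := ⟨a, ha⟩) (w := ⟨b, hb⟩) hab
      · exact C.valid hab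
  simpa [Fintype.card_subtype_compl, Fintype.card_coe] using E.colorable

theorem Coloring.choose_three_le_ncard_inducedCycles [Finite V] {k : ℕ} (C : G.Coloring (Fin k))
    (hk : (k : ℕ∞) ≤ G.chromaticNumber) : k.choose 3 ≤ G.inducedCycles.ncard := by
  have key : ∀ T : Finset (Fin k), #T = 3 → ∃ s ∈ G.inducedCycles, C '' s = T := by
    intro T hT
    have hk3 : 3 ≤ k := by simpa [hT] using card_le_univ T
    have hT2 : ¬ (G.induce {v | C v ∈ T}).Colorable 2 := fun h2 => by
      have := le_chromaticNumber_iff_colorable.mp hk _ (C.colorable_of_colorable_induce T h2)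
      simp only [Fintype.card_fin, hT] at this
      omega
    obtain ⟨m, hodd, hm, ⟨e⟩⟩ := exists_cycleGraph_embedding_of_not_colorable_two hT2
    let f := (Embedding.induce _).comp e
    refine ⟨Set.range f, isInducedCycle_range hm f, subset_antisymm ?_ fun c hc => ?_⟩
    · rintro _ ⟨_, ⟨x, rfl⟩, rfl⟩
      exact (e x).2
    · by_contra hmiss
      let D : (cycleGraph m).Coloring (T.erase c) := Coloring.mk
        (fun x => ⟨C (f x), mem_erase.mpr ⟨fun h => hmiss ⟨_, ⟨x, rfl⟩, h⟩, (e x).2⟩⟩)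
        fun hxy h => C.valid (f.map_adj_iff.mpr hxy) (congrArg Subtype.val h)
      apply not_colorable_two_cycleGraph_of_odd hodd hm
      have := D.colorable
      rwa [Fintype.card_coe, card_erase_of_mem hc, hT] at this
  simpa using choose_card_le_ncard_of_forall_card_eq (Set.toFinite _) _ 3 key

theorem choose_three_le_ncard_inducedCycles_of_le_chromaticNumber [Finite V] {n : ℕ}
    (hn : (n : ℕ∞) ≤ G.chromaticNumber) : n.choose 3 ≤ G.inducedCycles.ncard := by
  obtain ⟨C⟩ := G.colorable_chromaticNumber_of_fintype
  have hfin : G.chromaticNumber ≠ ⊤ := chromaticNumber_ne_top_iff_exists.mpr ⟨_, ⟨C⟩⟩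
  refine (Nat.choose_le_choose 3 ?_).trans
    (C.choose_three_le_ncard_inducedCycles (ENat.natCast_toNat_le_self _))
  simpa using ENat.toNat_le_toNat hn hfin

def offBetween (G : SimpleGraph V) (A B C : Set V) : SimpleGraph V where
  Adj a b := G.Adj a b ∧ a ∈ A ∪ B ∪ C ∧ b ∈ A ∪ B ∪ C ∧ ¬ (G.between B C).Adj a b
  symm := ⟨fun _ _ h => ⟨h.1.symm, h.2.2.1, h.2.1, fun h' => h.2.2.2 h'.symm⟩⟩
  loopless := ⟨fun _ h => G.irrefl h.1⟩

section offBetween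

variable {A B C : Set V}

theorem offBetween_adj {a b : V} : (G.offBetween A B C).Adj a b ↔
    G.Adj a b ∧ a ∈ A ∪ B ∪ C ∧ b ∈ A ∪ B ∪ C ∧ ¬ (G.between B C).Adj a b :=
  Iff.rfl

theorem offBetween_le : G.offBetween A B C ≤ G := fun _ _ h => h.1

theorem Walk.mem_of_mem_support_offBetween {x y : V} (p : (G.offBetween A B C).Walk x y)
    (hy : y ∈ A ∪ B ∪ C) {v : V} (hv : v ∈ p.support) : v ∈ A ∪ B ∪ C := by
  obtain ⟨k, rfl, -⟩ := Walk.mem_support_iff_exists_getVert.mp hv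
  rcases lt_or_ge k p.length with hk | hk
  · exact (p.adj_getVert_succ hk).2.1
  · rwa [p.getVert_of_length_le hk]

theorem reachable_offBetween (hAB : Disjoint A B) (hAC : Disjoint A C) (hBC : Disjoint B C)
    (hA : (G.induce A).Preconnected) (hB : (G.induce B).Preconnected)
    (hC : (G.induce C).Preconnected) (eAB : ∃ a ∈ A, ∃ b ∈ B, G.Adj a b)
    (eAC : ∃ a ∈ A, ∃ c ∈ C, G.Adj a c) {x y : V} (hx : x ∈ B) (hy : y ∈ C) :
    (G.offBetween A B C).Reachable x y := by
  have hpart : ∀ S ⊆ A ∪ B ∪ C, (G.induce S).Preconnected → Disjoint S B ∨ Disjoint S C →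
      ∀ a ∈ S, ∀ b ∈ S, (G.offBetween A B C).Reachable a b := by
    intro S hSU hS hdisj a ha b hb
    refine (hS ⟨a, ha⟩ ⟨b, hb⟩).map ⟨Subtype.val, fun {v w} hvw =>
      offBetween_adj.mpr ⟨hvw, hSU v.2, hSU w.2, fun ⟨_, h⟩ => ?_⟩⟩
    rcases hdisj with hd | hd
    · exact h.elim (fun h => hd.notMem_of_mem_left v.2 h.1) fun h => hd.notMem_of_mem_left w.2 h.2
    · exact h.elim (fun h => hd.notMem_of_mem_left w.2 h.2) fun h => hd.notMem_of_mem_left v.2 h.1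
  have hfromA : ∀ a ∈ A, ∀ b ∈ A ∪ B ∪ C, G.Adj a b → (G.offBetween A B C).Adj a b :=
    fun a ha b hb hab => ⟨hab, .inl (.inl ha), hb, fun ⟨_, h⟩ => h.elim
      (fun h => hAB.notMem_of_mem_left ha h.1) fun h => hAC.notMem_of_mem_left ha h.1⟩
  obtain ⟨a₀, ha₀, b₀, hb₀, hab⟩ := eAB
  obtain ⟨a₁, ha₁, c₁, hc₁, hac⟩ := eAC
  have hxb : (G.offBetween A B C).Reachable x b₀ :=
    hpart B (fun _ h => .inl (.inr h)) hB (.inr hBC) _ hx _ hb₀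
  have hba : (G.offBetween A B C).Reachable b₀ a₀ :=
    (hfromA _ ha₀ _ (.inl (.inr hb₀)) hab).symm.reachable
  have haa : (G.offBetween A B C).Reachable a₀ a₁ :=
    hpart A (fun _ h => .inl (.inl h)) hA (.inr hAC) _ ha₀ _ ha₁
  have hac' : (G.offBetween A B C).Reachable a₁ c₁ := (hfromA _ ha₁ _ (.inr hc₁) hac).reachable
  have hcy : (G.offBetween A B C).Reachable c₁ y :=
    hpart C (fun _ h => .inr h) hC (.inl hBC.symm) _ hc₁ _ hy
  exact hxb.trans (hba.trans (haa.trans (hac'.trans hcy)))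

/-- A path minimising the length over all `B`–`C` edges has no chord: a chord that is an edge of
`offBetween` shortcuts it, and one between `B` and `C` cuts out a shorter competitor. -/
theorem exists_chordless_path_offBetween (hBC : Disjoint B C) {x₀ y₀ : V} (hx₀ : x₀ ∈ B)
    (hy₀ : y₀ ∈ C) (hxy₀ : G.Adj x₀ y₀) (hreach : (G.offBetween A B C).Reachable x₀ y₀) :
    ∃ x ∈ B, ∃ y ∈ C, G.Adj x y ∧ ∃ p : (G.offBetween A B C).Walk x y, p.IsPath ∧
      2 ≤ p.length ∧ ∀ i j, i + 2 ≤ j → j ≤ p.length →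
        G.Adj (p.getVert i) (p.getVert j) → i = 0 ∧ j = p.length := by
  classical
  have hex : ∃ ℓ, ∃ x ∈ B, ∃ y ∈ C, G.Adj x y ∧
      ∃ p : (G.offBetween A B C).Walk x y, p.length = ℓ :=
    ⟨_, x₀, hx₀, y₀, hy₀, hxy₀, hreach.some, rfl⟩
  obtain ⟨x, hx, y, hy, hxy, p₀, hp₀⟩ := Nat.find_spec hex
  have hmin : ∀ {x' y' : V} (p' : (G.offBetween A B C).Walk x' y'),
      (G.between B C).Adj x' y' → Nat.find hex ≤ p'.length := by
    rintro x' y' p' ⟨hadj, ⟨hx', hy'⟩ | ⟨hx', hy'⟩⟩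
    · exact Nat.find_min' hex ⟨x', hx', y', hy', hadj, p', rfl⟩
    · exact Nat.find_min' hex ⟨y', hy', x', hx', hadj.symm, p'.reverse, p'.length_reverse⟩
  set p := p₀.bypass
  have hlen : p.length = Nat.find hex :=
    le_antisymm (hp₀ ▸ p₀.length_bypass_le_length) (hmin p ⟨hxy, .inl ⟨hx, hy⟩⟩)
  rw [← hlen] at hmin
  refine ⟨x, hx, y, hy, hxy, p, p₀.bypass_isPath, ?_, fun i j hij hj hadj => ?_⟩
  · by_contra! hlt
    interval_cases h : p.length
    · exact hBC.notMem_of_mem_left hx (Walk.eq_of_length_eq_zero h ▸ hy)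
    · exact (Walk.adj_of_length_eq_one h).2.2.2 ⟨hxy, .inl ⟨hx, hy⟩⟩
  by_contra hend
  obtain ⟨a, q, b, ha, hq, hb⟩ := p.exists_split_at (by omega : i ≤ j) hj
  by_cases hcross : (G.between B C).Adj (p.getVert i) (p.getVert j)
  · have := hmin q hcross
    omega
  · have hU := fun k => p.mem_of_mem_support_offBetween (.inr hy) (p.getVert_mem_support k)
    have hHadj : (G.offBetween A B C).Adj (p.getVert i) (p.getVert j) :=
      ⟨hadj, hU i, hU j, hcross⟩
    have := hmin (a.append (Walk.cons hHadj b)) ⟨hxy, .inl ⟨hx, hy⟩⟩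
    simp only [Walk.length_append, Walk.length_cons] at this
    omega

theorem exists_isInducedCycle_of_preconnected_triple
    (hAB : Disjoint A B) (hAC : Disjoint A C) (hBC : Disjoint B C)
    (hA : (G.induce A).Preconnected) (hB : (G.induce B).Preconnected)
    (hC : (G.induce C).Preconnected) (eAB : ∃ a ∈ A, ∃ b ∈ B, G.Adj a b)
    (eAC : ∃ a ∈ A, ∃ c ∈ C, G.Adj a c) (eBC : ∃ b ∈ B, ∃ c ∈ C, G.Adj b c) :
    ∃ s, G.IsInducedCycle s ∧ s ⊆ A ∪ B ∪ C ∧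
      (s ∩ A).Nonempty ∧ (s ∩ B).Nonempty ∧ (s ∩ C).Nonempty := by
  obtain ⟨x₀, hx₀, y₀, hy₀, hxy₀⟩ := eBC
  obtain ⟨x, hx, y, hy, hxy, p, hp, h2, hchord⟩ := exists_chordless_path_offBetween hBC hx₀ hy₀
    hxy₀ (reachable_offBetween hAB hAC hBC hA hB hC eAB eAC hx₀ hy₀)
  obtain ⟨f, hf⟩ := (hp.mapLe offBetween_le).exists_cycleGraph_embedding hxy
    fun i j hij hj hadj => by
      simp only [Walk.getVert_map, Hom.ofLE_apply, Walk.length_map] at hadj hj ⊢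
      exact hchord i j hij hj hadj
  rw [Walk.support_mapLe_eq_support] at hf
  obtain ⟨d, hd, hdB, hdB'⟩ := p.exists_boundary_dart B hx (hBC.notMem_of_mem_right hy)
  have hdA : d.snd ∈ A := by
    obtain ⟨hG, -, hsnd, hncross⟩ := d.adj
    rcases hsnd with (hsnd | hsnd) | hsnd
    · exact hsnd
    · exact absurd hsnd hdB'
    · exact absurd ⟨hG, .inl ⟨hdB, hsnd⟩⟩ hncross
  refine ⟨Set.range f, isInducedCycle_range (by simp only [Walk.length_map]; omega) f, ?_,
    ⟨d.snd, ?_, hdA⟩, ⟨x, ?_, hx⟩, ⟨y, ?_, hy⟩⟩ <;> rw [hf]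
  · exact fun v => p.mem_of_mem_support_offBetween (.inr hy)
  · exact p.dart_snd_mem_support_of_mem_darts hd
  · exact p.start_mem_support
  · exact p.end_mem_support

end offBetween

theorem IsMinor.card_le [Finite V] {W : Type*} {H : SimpleGraph W} (h : G.IsMinor H) :
    Nat.card W ≤ Nat.card V := by
  obtain ⟨f, hne, -, hdisj, -⟩ := h
  refine Nat.card_le_card_of_injective (fun w => (hne w).some) fun w w' he => ?_
  by_contra hww'
  refine (hdisj w w' hww').notMem_of_mem_left (hne w).some_mem ?_
  rw [show (hne w).some = (hne w').some from he]
  exact (hne w').some_mem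

theorem isMinor_top_hadwigerNumber [Finite V] :
    G.IsMinor (⊤ : SimpleGraph (Fin G.hadwigerNumber)) := by
  have hbdd : BddAbove {t | G.IsMinor (⊤ : SimpleGraph (Fin t))} :=
    ⟨Nat.card V, fun t (ht : G.IsMinor _) => by simpa using ht.card_le⟩
  have hK₀ : G.IsMinor (⊤ : SimpleGraph (Fin 0)) :=
    ⟨Fin.elim0, fun w => w.elim0, fun w => w.elim0, fun w => w.elim0, fun w => w.elim0⟩
  exact Nat.sSup_mem ⟨0, hK₀⟩ hbdd

theorem IsMinor.choose_three_le_ncard_inducedCycles [Finite V] {t : ℕ}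
    (h : G.IsMinor (⊤ : SimpleGraph (Fin t))) : t.choose 3 ≤ G.inducedCycles.ncard := by
  obtain ⟨f, -, hconn, hdisj, hadj⟩ := h
  have key : ∀ T : Finset (Fin t), #T = 3 →
      ∃ s ∈ G.inducedCycles, {i | (s ∩ f i).Nonempty} = T := by
    intro T hT
    obtain ⟨a, b, c, hab, hac, hbc, rfl⟩ := card_eq_three.mp hT
    obtain ⟨s, hs, hsub, hsa, hsb, hsc⟩ := exists_isInducedCycle_of_preconnected_triple
      (hdisj a b hab) (hdisj a c hac) (hdisj b c hbc) (hconn a).preconnected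
      (hconn b).preconnected (hconn c).preconnected (hadj a b hab) (hadj a c hac) (hadj b c hbc)
    refine ⟨s, hs, Set.ext fun i => ⟨fun ⟨v, hvs, hvi⟩ => ?_, fun hi => ?_⟩⟩
    · by_contra hi
      simp only [coe_insert, coe_singleton, Set.mem_insert_iff, Set.mem_singleton_iff,
        not_or] at hi
      rcases hsub hvs with (hv | hv) | hv
      · exact (hdisj i a hi.1).notMem_of_mem_left hvi hv
      · exact (hdisj i b hi.2.1).notMem_of_mem_left hvi hv
      · exact (hdisj i c hi.2.2).notMem_of_mem_left hvi hv
    · simp only [coe_insert, coe_singleton, Set.mem_insert_iff, Set.mem_singleton_iff] at hi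
      rcases hi with rfl | rfl | rfl
      exacts [hsa, hsb, hsc]
  simpa using choose_card_le_ncard_of_forall_card_eq (Set.toFinite _) _ 3 key

theorem choose_three_le_ncard_inducedCycles_of_le_hadwigerNumber [Finite V] {n : ℕ}
    (hn : n ≤ G.hadwigerNumber) : n.choose 3 ≤ G.inducedCycles.ncard :=
  (Nat.choose_le_choose 3 hn).trans G.isMinor_top_hadwigerNumber.choose_three_le_ncard_inducedCycles

end SimpleGraph

theorem stmt19_general {V : Type*} [Fintype V] (G : SimpleGraph V)
    (n : ℕ) (hC : G.inducedCycles.ncard < n.choose 3) :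
    G.chromaticNumber < (n : ℕ∞) ∧ G.hadwigerNumber < n :=
  ⟨lt_of_not_ge fun h => hC.not_ge (G.choose_three_le_ncard_inducedCycles_of_le_chromaticNumber h),
    lt_of_not_ge fun h => hC.not_ge (G.choose_three_le_ncard_inducedCycles_of_le_hadwigerNumber h)⟩

theorem stmt19 {V : Type*} [Fintype V] (G : SimpleGraph V) (hconn : G.Connected)
    (n : ℕ) (hC : G.inducedCycles.ncard < n.choose 3) :
    G.chromaticNumber < (n : ℕ∞) ∧ G.hadwigerNumber < n :=
  stmt19_general G n hC
end
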